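/- (One-step Fejér-type inequality for Ryu splitting.) Let A, B, C be monotone set-valued operators on H, let γ > 0 and let λ > 0. Suppose x, y, u ∈ H satisfy x − u ∈ γ•A(u), y ∈ γ•B(u) and u − x − y ∈ γ•C(u). Suppose x', y', u', v', w' ∈ H satisfy x' − u' ∈ γ•A(u'), (u' + y') − v' ∈ γ•B(v') and (u' − x' + v' − y') − w' ∈ γ•C(w'), and set x'' := x' + λ(w' − u') and y'' := y' + λ(w' − v'). Then ‖x'' − x‖² + ‖y'' − y‖² + ((1 − λ)/λ)·(‖x'' − x'‖² + ‖y'' − y'‖²) ≤ ‖x' − x‖² + ‖y' − y‖². -/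

import Mathlib

/-!
Monotonicity of `γA`, `γB`, `γC` at the pairs `(u, u')`, `(u, v')`, `(u, w')`, summed, says that
the Ryu residual `d = (w' - u', w' - v')` at `z = (x', y')` satisfies
`2⟪z - z*, d⟫ + ‖d‖² ≤ -‖u' - v'‖² ≤ 0`, where `z* = (x, y)` is the fixed point coming from `u`.
For the relaxed step `z + λd` this is exactly the claimed inequality, since
`‖z + λd - z*‖² + (1 - λ)λ‖d‖² = ‖z - z*‖² + λ(2⟪z - z*, d⟫ + ‖d‖²)`.
-/

open scoped RealInnerProductSpace Pointwise

/-- `A` is monotone. -/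
def IsMonotoneOp {H : Type*} [NormedAddCommGroup H] [InnerProductSpace ℝ H]
    (A : H → Set H) : Prop :=
  ∀ x y u v : H, u ∈ A x → v ∈ A y → 0 ≤ ⟪x - y, u - v⟫

section

variable {H : Type*} [NormedAddCommGroup H] [InnerProductSpace ℝ H]

theorem IsMonotoneOp.smul {A : H → Set H} (hA : IsMonotoneOp A) {γ : ℝ} (hγ : 0 ≤ γ) :
    IsMonotoneOp (γ • A) := by
  rintro x y _ _ ⟨a, ha, rfl⟩ ⟨b, hb, rfl⟩
  rw [← smul_sub, real_inner_smul_right]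
  exact mul_nonneg hγ (hA x y a b ha hb)

/-- At `λ = 0` both sides reduce to `‖z - z₀‖ ^ 2`, because `(1 - 0) / 0 = 0`. -/
theorem norm_add_smul_sub_sq_add_div_mul (z z₀ d : H) (lam : ℝ) :
    ‖z + lam • d - z₀‖ ^ 2 + (1 - lam) / lam * ‖z + lam • d - z‖ ^ 2 =
      ‖z - z₀‖ ^ 2 + lam * (2 * ⟪z - z₀, d⟫ + ‖d‖ ^ 2) := by
  rw [add_sub_right_comm, add_sub_cancel_left, norm_add_sq_real, norm_smul, mul_pow,
    real_inner_smul_right, Real.norm_eq_abs, sq_abs]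
  rcases eq_or_ne lam 0 with rfl | hlam
  · simp
  · field_simp
    ring

theorem ryu_step_inner_le {A B C : H → Set H}
    (hA : IsMonotoneOp A) (hB : IsMonotoneOp B) (hC : IsMonotoneOp C)
    {γ : ℝ} (hγ : 0 ≤ γ) {x y u x' y' u' v' w' : H}
    (hxu : x - u ∈ γ • A u) (hyu : y ∈ γ • B u) (hu : u - x - y ∈ γ • C u)
    (hx'u' : x' - u' ∈ γ • A u') (hv' : (u' + y') - v' ∈ γ • B v')
    (hw' : (u' - x' + v' - y') - w' ∈ γ • C w') :
    2 * ⟪x' - x, w' - u'⟫ + ‖w' - u'‖ ^ 2 + (2 * ⟪y' - y, w' - v'⟫ + ‖w' - v'‖ ^ 2) ≤ 0 := by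
  have hMA := hA.smul hγ u u' _ _ hxu hx'u'
  have hMB := hB.smul hγ u v' _ _ hyu hv'
  have hMC := hC.smul hγ u w' _ _ hu hw'
  -- The left-hand side plus `‖u' - v'‖ ^ 2` equals `-2 * (hMA + hMB + hMC)`.
  have huv := sq_nonneg ‖u' - v'‖
  simp only [← real_inner_self_eq_norm_sq, inner_sub_left, inner_sub_right, inner_add_right,
    real_inner_comm] at hMA hMB hMC huv ⊢
  linarith

end

theorem ryu_fejer_inequality_general {H : Type*} [NormedAddCommGroup H]
    [InnerProductSpace ℝ H]
    (A B C : H → Set H)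
    (hA : IsMonotoneOp A) (hB : IsMonotoneOp B) (hC : IsMonotoneOp C)
    (γ lam : ℝ) (hγ : 0 < γ) (hlam : 0 < lam)
    (x y u : H)
    (hxu : x - u ∈ γ • A u) (hyu : y ∈ γ • B u) (hu : u - x - y ∈ γ • C u)
    (x' y' u' v' w' x'' y'' : H)
    (hx'u' : x' - u' ∈ γ • A u')
    (hv' : (u' + y') - v' ∈ γ • B v')
    (hw' : (u' - x' + v' - y') - w' ∈ γ • C w')
    (hx'' : x'' = x' + lam • (w' - u'))
    (hy'' : y'' = y' + lam • (w' - v')) :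
    ‖x'' - x‖ ^ 2 + ‖y'' - y‖ ^ 2 +
        ((1 - lam) / lam) * (‖x'' - x'‖ ^ 2 + ‖y'' - y'‖ ^ 2) ≤
      ‖x' - x‖ ^ 2 + ‖y' - y‖ ^ 2 := by
  have hstep := ryu_step_inner_le hA hB hC hγ.le hxu hyu hu hx'u' hv' hw'
  subst hx'' hy''
  rw [mul_add, add_add_add_comm, norm_add_smul_sub_sq_add_div_mul,
    norm_add_smul_sub_sq_add_div_mul]
  linarith [mul_nonpos_of_nonneg_of_nonpos hlam.le hstep]

/-- One-step Fejér-type inequality for Ryu splitting. -/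
theorem ryu_fejer_inequality {H : Type*} [NormedAddCommGroup H]
    [InnerProductSpace ℝ H] [CompleteSpace H]
    (A B C : H → Set H)
    (hA : IsMonotoneOp A) (hB : IsMonotoneOp B) (hC : IsMonotoneOp C)
    (γ lam : ℝ) (hγ : 0 < γ) (hlam : 0 < lam)
    (x y u : H)
    (hxu : x - u ∈ γ • A u) (hyu : y ∈ γ • B u) (hu : u - x - y ∈ γ • C u)
    (x' y' u' v' w' x'' y'' : H)
    (hx'u' : x' - u' ∈ γ • A u')
    (hv' : (u' + y') - v' ∈ γ • B v')
    (hw' : (u' - x' + v' - y') - w' ∈ γ • C w')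
    (hx'' : x'' = x' + lam • (w' - u'))
    (hy'' : y'' = y' + lam • (w' - v')) :
    ‖x'' - x‖ ^ 2 + ‖y'' - y‖ ^ 2 +
        ((1 - lam) / lam) * (‖x'' - x'‖ ^ 2 + ‖y'' - y'‖ ^ 2) ≤
      ‖x' - x‖ ^ 2 + ‖y' - y‖ ^ 2 :=
  ryu_fejer_inequality_general A B C hA hB hC γ lam hγ hlam x y u hxu hyu hu x' y' u' v' w' x'' y''
    hx'u' hv' hw' hx'' hy''
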